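/- Let G be a linear algebraic group over an algebraically closed field K acting by automorphisms on a K-algebra S, let R = K[a_1,…,a_n] ⊆ S, and suppose there exist g_1,…,g_n ∈ K[G] ⊗ R such that σ^{−1}·a_i = g_i(σ) for all σ ∈ G. Then, with D̂ := (y_1 − g_1, …, y_n − g_n) ⊆ K[G] ⊗ S[y_1,…,y_n], the Derksen ideal is the elimination ideal: D_{a_1,…,a_n} = S[y_1,…,y_n] ∩ D̂. -/

import Mathlib

open MvPolynomial
set_option synthInstance.maxHeartbeats 4000000
set_option maxHeartbeats 4000000
set_option maxSynthPendingDepth 5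
noncomputable section

namespace AlgGeo

variable {K : Type*} [Field K]

/-- The zero locus in affine `N`-space of a set of polynomials. -/
def zeroLocus {N : ℕ} (S : Set (MvPolynomial (Fin N) K)) : Set (Fin N → K) :=
  {x | ∀ f ∈ S, eval x f = 0}

/-- An (affine) algebraic set: the zero locus of a set of polynomials. -/
def IsAlgebraicSet {N : ℕ} (V : Set (Fin N → K)) : Prop :=
  ∃ S : Set (MvPolynomial (Fin N) K), V = zeroLocus S

/-- The vanishing ideal of a subset of affine `N`-space. -/
def vanishingIdeal {N : ℕ} (V : Set (Fin N → K)) :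
    Ideal (MvPolynomial (Fin N) K) where
  carrier := {f | ∀ x ∈ V, eval x f = 0}
  add_mem' := by
    intro a b ha hb x hx
    simp only [Set.mem_setOf_eq, map_add, ha x hx, hb x hx, add_zero]
  zero_mem' := by intro x _; simp
  smul_mem' := by
    intro c a ha x hx
    simp only [Set.mem_setOf_eq, smul_eq_mul, map_mul, ha x hx, mul_zero]

/-- The Zariski closure of a subset of affine `N`-space. -/
def zclosure {N : ℕ} (V : Set (Fin N → K)) : Set (Fin N → K) :=
  zeroLocus (vanishingIdeal V : Set (MvPolynomial (Fin N) K))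

/-- The Krull dimension of a subset of affine `N`-space (the Krull dimension of
its coordinate ring). -/
def dimOfSet {N : ℕ} (V : Set (Fin N → K)) : WithBot (WithTop ℕ) :=
  ringKrullDim (MvPolynomial (Fin N) K ⧸ vanishingIdeal V)

/-- The coordinate ring of `V`: the `K`-algebra of functions `V → K` that are
restrictions of polynomials. -/
def coordRing {N : ℕ} (V : Set (Fin N → K)) : Subalgebra K (↥V → K) where
  carrier := {f | ∃ p : MvPolynomial (Fin N) K, ∀ x : V, f x = eval (x : Fin N → K) p}
  mul_mem' := by
    rintro f g ⟨p, hp⟩ ⟨q, hq⟩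
    exact ⟨p * q, fun x => by simp [hp x, hq x]⟩
  one_mem' := ⟨1, fun x => by simp⟩
  add_mem' := by
    rintro f g ⟨p, hp⟩ ⟨q, hq⟩
    exact ⟨p + q, fun x => by simp [hp x, hq x]⟩
  zero_mem' := ⟨0, fun x => by simp⟩
  algebraMap_mem' := fun c => ⟨C c, fun x => by simp⟩

/-- Evaluation of a regular function at a point, as a ring homomorphism. -/
def evAt {N : ℕ} {V : Set (Fin N → K)} (x : ↥V) : ↥(coordRing V) →+* K :=
  (Pi.evalRingHom (fun _ : ↥V => K) x).comp (coordRing V).val.toRingHom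

/-- Evaluation of a regular function at a point, as a `K`-algebra homomorphism. -/
def evAtAlg {N : ℕ} {V : Set (Fin N → K)} (x : ↥V) : ↥(coordRing V) →ₐ[K] K :=
  (Pi.evalAlgHom K (fun _ : ↥V => K) x).comp (coordRing V).val

/-- A linear algebraic group over `K`, realized as an algebraic subset of affine
`m`-space whose group operations are given by polynomial maps. -/
structure AlgGroup (K : Type*) [Field K] where
  m : ℕ
  car : Set (Fin m → K)
  isAlg : IsAlgebraicSet car
  one : Fin m → K
  one_mem : one ∈ car
  mul : (Fin m → K) → (Fin m → K) → (Fin m → K)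
  inv : (Fin m → K) → (Fin m → K)
  mul_polynomial : ∀ i : Fin m, ∃ p : MvPolynomial (Fin m ⊕ Fin m) K,
    ∀ x ∈ car, ∀ y ∈ car, mul x y i = eval (Sum.elim x y) p
  inv_polynomial : ∀ i : Fin m, ∃ p : MvPolynomial (Fin m) K,
    ∀ x ∈ car, inv x i = eval x p
  mul_mem : ∀ {x y}, x ∈ car → y ∈ car → mul x y ∈ car
  inv_mem : ∀ {x}, x ∈ car → inv x ∈ car
  mul_assoc' : ∀ x ∈ car, ∀ y ∈ car, ∀ z ∈ car, mul (mul x y) z = mul x (mul y z)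
  one_mul' : ∀ x ∈ car, mul one x = x
  mul_one' : ∀ x ∈ car, mul x one = x
  inv_mul' : ∀ x ∈ car, mul (inv x) x = one

instance (G : AlgGroup K) : Monoid ↥G.car where
  mul a b := ⟨G.mul a b, G.mul_mem a.2 b.2⟩
  one := ⟨G.one, G.one_mem⟩
  mul_assoc a b c := Subtype.ext (G.mul_assoc' _ a.2 _ b.2 _ c.2)
  one_mul a := Subtype.ext (G.one_mul' _ a.2)
  mul_one a := Subtype.ext (G.mul_one' _ a.2)

/-- The inverse of a group element, as a point of the group. -/
def AlgGroup.invPt (G : AlgGroup K) (σ : ↥G.car) : ↥G.car := ⟨G.inv σ, G.inv_mem σ.2⟩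

/-- An affine `G`-variety: an algebraic subset of affine `n`-space with an
action of `G` given by polynomial maps. -/
structure GVariety (K : Type*) [Field K] (G : AlgGroup K) where
  n : ℕ
  car : Set (Fin n → K)
  isAlg : IsAlgebraicSet car
  act : (Fin G.m → K) → (Fin n → K) → (Fin n → K)
  act_polynomial : ∀ i : Fin n, ∃ p : MvPolynomial (Fin n ⊕ Fin G.m) K,
    ∀ σ ∈ G.car, ∀ x ∈ car, act σ x i = eval (Sum.elim x σ) p
  act_mem : ∀ {σ x}, σ ∈ G.car → x ∈ car → act σ x ∈ car
  act_one : ∀ x ∈ car, act G.one x = x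
  act_mul : ∀ σ ∈ G.car, ∀ τ ∈ G.car, ∀ x ∈ car,
    act (G.mul σ τ) x = act σ (act τ x)
  act_regular : ∀ σ ∈ G.car, ∀ p : MvPolynomial (Fin n) K,
    ∃ q : MvPolynomial (Fin n) K, ∀ x ∈ car, eval (act σ x) p = eval x q

namespace GVariety

variable {G : AlgGroup K} (X : GVariety K G)

/-- The action on points. -/
def actPt (σ : ↥G.car) (x : ↥X.car) : ↥X.car := ⟨X.act σ x, X.act_mem σ.2 x.2⟩

/-- The action of `σ ∈ G` on functions on `X`: `(σ·f)(x) = f(σ⁻¹·x)`. -/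
def gactFun (σ : ↥G.car) (f : ↥X.car → K) : ↥X.car → K :=
  fun x => f (X.actPt (G.invPt σ) x)

theorem gactFun_mem (σ : ↥G.car) {f : ↥X.car → K} (hf : f ∈ coordRing X.car) :
    X.gactFun σ f ∈ coordRing X.car := by
  obtain ⟨p, hp⟩ := hf
  obtain ⟨q, hq⟩ := X.act_regular (G.inv σ) (G.inv_mem σ.2) p
  refine ⟨q, fun x => ?_⟩
  have : X.gactFun σ f x = f (X.actPt (G.invPt σ) x) := rfl
  rw [this, hp]
  exact hq (x : Fin X.n → K) x.2

/-- The action of `σ ∈ G` on the coordinate ring of `X`, as a ring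
homomorphism. -/
def gactHom (σ : ↥G.car) : ↥(coordRing X.car) →+* ↥(coordRing X.car) where
  toFun f := ⟨X.gactFun σ f, X.gactFun_mem σ f.2⟩
  map_one' := Subtype.ext (funext fun _ => rfl)
  map_mul' _ _ := Subtype.ext (funext fun _ => rfl)
  map_zero' := Subtype.ext (funext fun _ => rfl)
  map_add' _ _ := Subtype.ext (funext fun _ => rfl)

/-- The orbit of a point of `X`. -/
def orbit (x : ↥X.car) : Set (Fin X.n → K) :=
  {y | ∃ σ ∈ G.car, X.act σ (x : Fin X.n → K) = y}

/-- `d` is the maximal dimension of a `G`-orbit in `X`. -/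
def IsMaxOrbitDim (d : ℕ) : Prop :=
  (∀ x : ↥X.car, dimOfSet (X.orbit x) ≤ (d : WithBot (WithTop ℕ))) ∧
  ∃ x : ↥X.car, dimOfSet (X.orbit x) = (d : WithBot (WithTop ℕ))

end GVariety

end AlgGeo

/-! For `σ ∈ G` let `ε_σ : K[G] ⊗ S → S` be evaluation at `σ`. It is the identity on `S` and
sends `g_i` to `σ⁻¹·a_i`, so `ε_σ (p(g)) = p(σ⁻¹·a)` for `p ∈ S[y]`. Membership in
`(y_1 - c_1, …, y_n - c_n)` means vanishing at `c`, hence `p ∈ D` iff `ε_σ (p(g)) = 0` for all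
`σ`. Since the points of `G` separate `K[G]`, and `S` is free over the field `K`, they also
separate `K[G] ⊗ S`; so this holds iff `p(g) = 0`, i.e. `p ∈ D̂`. -/

namespace AlgGeo

open scoped TensorProduct

section EvalIdeal

variable {B ι : Type*} [CommRing B] (c : ι → B)

theorem sub_C_eval_mem_span_X_sub_C (q : MvPolynomial ι B) :
    q - C (eval c q) ∈
      Ideal.span (Set.range fun i => (X i : MvPolynomial ι B) - C (c i)) := by
  set I := Ideal.span (Set.range fun i => (X i : MvPolynomial ι B) - C (c i))
  induction q using MvPolynomial.induction_on with
  | C a => simp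
  | add p q hp hq => simpa [sub_add_sub_comm] using I.add_mem hp hq
  | mul_X q i hq =>
    have hsplit : q * X i - C (eval c (q * X i)) =
        q * (X i - C (c i)) + (q - C (eval c q)) * C (c i) := by
      simp only [eval_X, map_mul]
      ring
    rw [hsplit]
    exact I.add_mem (I.mul_mem_left _ (Ideal.subset_span ⟨i, rfl⟩)) (I.mul_mem_right _ hq)

theorem mem_span_X_sub_C_iff (p : MvPolynomial ι B) :
    p ∈ Ideal.span (Set.range fun i => (X i : MvPolynomial ι B) - C (c i)) ↔
      eval c p = 0 := by
  refine ⟨fun hp => ?_, fun h => by simpa [h] using sub_C_eval_mem_span_X_sub_C c p⟩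
  have hle : Ideal.span (Set.range fun i => (X i : MvPolynomial ι B) - C (c i)) ≤
      RingHom.ker (eval c) :=
    Ideal.span_le.mpr (by rintro _ ⟨i, rfl⟩; simp)
  exact hle hp

end EvalIdeal

theorem eq_zero_of_forall_lift_eq_zero {K A S ι : Type*} [Field K] [CommRing A] [Algebra K A]
    [CommRing S] [Algebra K S] (φ : ι → A →ₐ[K] K) (hφ : ∀ a, (∀ x, φ x a = 0) → a = 0)
    (t : A ⊗[K] S)
    (ht : ∀ x, Algebra.TensorProduct.lift ((Algebra.ofId K S).comp (φ x)) (AlgHom.id K S)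
      (fun _ _ => Commute.all _ _) t = 0) : t = 0 := by
  classical
  let b := Module.Basis.ofVectorSpace K S
  let e : A ⊗[K] S ≃ₗ[K] (Module.Basis.ofVectorSpaceIndex K S →₀ A) :=
    (TensorProduct.congr (LinearEquiv.refl K A) b.repr).trans
      (TensorProduct.finsuppScalarRight K K A _)
  have hcoord : ∀ (u : A ⊗[K] S) x j,
      b.repr (Algebra.TensorProduct.lift ((Algebra.ofId K S).comp (φ x)) (AlgHom.id K S)
        (fun _ _ => Commute.all _ _) u) j = φ x (e u j) := by
    intro u x j
    induction u using TensorProduct.induction_on with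
    | zero => simp
    | tmul f s =>
      have he : e (f ⊗ₜ[K] s) j = b.repr s j • f :=
        TensorProduct.finsuppScalarRight_apply_tmul_apply f (b.repr s) j
      rw [Algebra.TensorProduct.lift_tmul, he, map_smul, AlgHom.comp_apply, Algebra.ofId_apply,
        AlgHom.id_apply, ← Algebra.smul_def, map_smul, Finsupp.smul_apply, smul_eq_mul,
        mul_comm, smul_eq_mul]
    | add u v hu hv => simp [hu, hv]
  have : e t = 0 := Finsupp.ext fun j => hφ _ fun x => by simp [← hcoord, ht x]
  simpa using this

theorem AlgGroup.invPt_invPt {K : Type*} [Field K] (G : AlgGroup K) (σ : ↥G.car) :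
    G.invPt (G.invPt σ) = σ := by
  have hmul : ∀ τ : ↥G.car, G.invPt τ * τ = 1 := fun τ => Subtype.ext (G.inv_mul' τ.1 τ.2)
  calc G.invPt (G.invPt σ) = G.invPt (G.invPt σ) * (G.invPt σ * σ) := by rw [hmul, mul_one]
    _ = σ := by rw [← mul_assoc, hmul, one_mul]

theorem apply_eval_map_of_comp_eq_id {R T σ : Type*} [CommRing R] [CommRing T] (f : R →+* T)
    (ψ : T →+* R) (hψ : ψ.comp f = RingHom.id R) (g : σ → T) (p : MvPolynomial σ R) :
    ψ (eval g (map f p)) = eval (ψ ∘ g) p := by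
  rw [eval_map, eval₂_comp_left, hψ]
  rfl

theorem statement16_general {K : Type*} [Field K]
    (G : AlgGroup K)
    (S : Type*) [CommRing S] [Algebra K S]
    [MulSemiringAction ↥G.car S]
    {nn : ℕ} (a : Fin nn → S)
    -- the elements g_i ∈ K[G] ⊗ R with σ⁻¹ · a_i = g_i(σ)
    (g : Fin nn → (↥(coordRing G.car) ⊗[K] S))
    (hg : ∀ (σ : ↥G.car) (i : Fin nn),
      (G.invPt σ) • a i =
        Algebra.TensorProduct.lift ((Algebra.ofId K S).comp (evAtAlg σ))
          (AlgHom.id K S) (fun _ _ => Commute.all _ _) (g i)) :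
    (⨅ σ : ↥G.car, Ideal.span (Set.range fun i : Fin nn =>
        (X i : MvPolynomial (Fin nn) S) - C (σ • a i))) =
      Ideal.comap
        (MvPolynomial.map (Algebra.TensorProduct.includeRight :
          S →ₐ[K] ↥(coordRing G.car) ⊗[K] S).toRingHom)
        (Ideal.span (Set.range fun i : Fin nn =>
          (X i : MvPolynomial (Fin nn) (↥(coordRing G.car) ⊗[K] S)) - C (g i))) := by
  let ε (σ : ↥G.car) : ↥(coordRing G.car) ⊗[K] S →ₐ[K] S :=
    Algebra.TensorProduct.lift ((Algebra.ofId K S).comp (evAtAlg σ)) (AlgHom.id K S)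
      (fun _ _ => Commute.all _ _)
  have hε (σ : ↥G.car) (p : MvPolynomial (Fin nn) S) :
      ε σ (eval g (map (Algebra.TensorProduct.includeRight :
        S →ₐ[K] ↥(coordRing G.car) ⊗[K] S).toRingHom p)) =
        eval (fun i => G.invPt σ • a i) p := by
    have hεS : (ε σ).toRingHom.comp Algebra.TensorProduct.includeRight.toRingHom =
        RingHom.id S :=
      congrArg AlgHom.toRingHom (Algebra.TensorProduct.lift_comp_includeRight' _ _ _)
    refine (apply_eval_map_of_comp_eq_id _ _ hεS g p).trans ?_
    exact congrArg (eval · p) (funext fun i => (hg σ i).symm)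
  have hpoints (f : ↥(coordRing G.car)) (hf : ∀ σ, evAtAlg σ f = 0) : f = 0 :=
    Subtype.ext (funext hf)
  ext p
  simp only [Ideal.mem_iInf, Ideal.mem_comap, mem_span_X_sub_C_iff]
  constructor
  · intro hp
    refine eq_zero_of_forall_lift_eq_zero evAtAlg hpoints _ fun σ => ?_
    exact (hε σ p).trans (hp _)
  · intro hp σ
    have h := hε (G.invPt σ) p
    rw [hp, map_zero, AlgGroup.invPt_invPt] at h
    exact h.symm

/-- If `σ⁻¹·a_i = g_i(σ)` with `g_i ∈ K[G] ⊗ R`, then the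
Derksen ideal is the elimination ideal
`D_{a_1,…,a_n} = S[y_1,…,y_n] ∩ (y_1 − g_1, …, y_n − g_n)`. -/
theorem statement16 {K : Type*} [Field K] [IsAlgClosed K]
    (G : AlgGroup K)
    (S : Type*) [CommRing S] [Algebra K S]
    [MulSemiringAction ↥G.car S]
    -- G acts by K-algebra automorphisms
    (hKfix : ∀ (σ : ↥G.car) (c : K), σ • (algebraMap K S c) = algebraMap K S c)
    {nn : ℕ} (a : Fin nn → S)
    -- R = K[a_1,…,a_n] is G-stable
    (hstab : ∀ (σ : ↥G.car), ∀ x ∈ Algebra.adjoin K (Set.range a),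
      σ • x ∈ Algebra.adjoin K (Set.range a))
    -- the elements g_i ∈ K[G] ⊗ R with σ⁻¹ · a_i = g_i(σ)
    (g : Fin nn → (↥(coordRing G.car) ⊗[K] S))
    (hgR : ∀ i, g i ∈ (Algebra.TensorProduct.map (AlgHom.id K ↥(coordRing G.car))
      (Algebra.adjoin K (Set.range a)).val).range)
    (hg : ∀ (σ : ↥G.car) (i : Fin nn),
      (G.invPt σ) • a i =
        Algebra.TensorProduct.lift ((Algebra.ofId K S).comp (evAtAlg σ))
          (AlgHom.id K S) (fun _ _ => Commute.all _ _) (g i)) :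
    (⨅ σ : ↥G.car, Ideal.span (Set.range fun i : Fin nn =>
        (X i : MvPolynomial (Fin nn) S) - C (σ • a i))) =
      Ideal.comap
        (MvPolynomial.map (Algebra.TensorProduct.includeRight :
          S →ₐ[K] ↥(coordRing G.car) ⊗[K] S).toRingHom)
        (Ideal.span (Set.range fun i : Fin nn =>
          (X i : MvPolynomial (Fin nn) (↥(coordRing G.car) ⊗[K] S)) - C (g i))) :=
  statement16_general G S a g hg

end AlgGeo
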